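/- arXiv:1106.5198 — 3 statements merged into one kernel-verified Lean document; each statement's English description precedes it below -/
import Mathlib

section
/- Let S be an inverse semigroup and let H be a closed inverse subsemigroup of S. Let F be the set of idempotents of H. Then F is a filter in E(S), and F↑ ⊆ H ⊆ F̄, where F̄ = {s ∈ S : for all f ∈ F, inv(s)·f·s ∈ F and s·f·inv(s) ∈ F}. Moreover F↑ is itself a closed inverse subsemigroup of S with set of idempotents F. -/
namespace InvSgpPaper

/-- `inv` makes the semigroup `S` an inverse semigroup: `a * inv a * a = a`,
`inv a * a * inv a = inv a`, and all idempotents commute. -/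
structure IsInvSgp (S : Type*) [Semigroup S] (inv : S → S) : Prop where
  mul_inv_mul : ∀ a : S, a * inv a * a = a
  inv_mul_inv : ∀ a : S, inv a * a * inv a = inv a
  idem_comm : ∀ e f : S, e * e = e → f * f = f → e * f = f * e

section Defs

variable {S X Y : Type*} [Semigroup S]

/-- The natural partial order on an inverse semigroup:
`a ≤ b` iff `a = e * b` for some idempotent `e`. -/
def nle (a b : S) : Prop := ∃ e : S, e * e = e ∧ a = e * b

/-- The upward closure `A↑` of a subset `A`. -/
def up (A : Set S) : Set S := {s : S | ∃ a ∈ A, nle a s}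

/-- A closed inverse subsemigroup: closed under multiplication, under `inv`,
and upward closed (`H = H↑`). -/
def IsClosedInvSub (inv : S → S) (H : Set S) : Prop :=
  (∀ a ∈ H, ∀ b ∈ H, a * b ∈ H) ∧ (∀ a ∈ H, inv a ∈ H) ∧ up H = H

/-- The left coset `(sH)↑ = {x | s * h ≤ x for some h ∈ H}`. -/
def lcoset (s : S) (H : Set S) : Set S := {x : S | ∃ h ∈ H, nle (s * h) x}

/-- The set of idempotents of a subset `A`. -/
def idemSet (A : Set S) : Set S := {e ∈ A | e * e = e}

/-- A filter in `E(S)`: a nonempty set of idempotents closed under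
multiplication and upward closed within `E(S)`. -/
def IsFilterE (F : Set S) : Prop :=
  F.Nonempty ∧ (∀ e ∈ F, e * e = e) ∧ (∀ e ∈ F, ∀ f ∈ F, e * f ∈ F) ∧
    (∀ e ∈ F, ∀ f : S, f * f = f → nle e f → f ∈ F)

/-- `F̄ = {s ∈ S : ∀ f ∈ F, inv s * f * s ∈ F ∧ s * f * inv s ∈ F}`. -/
def fbar (inv : S → S) (F : Set S) : Set S :=
  {s : S | ∀ f ∈ F, inv s * f * s ∈ F ∧ s * f * inv s ∈ F}

/-- The minimum group congruence `σ`: `a σ b` iff some `c` satisfies `c ≤ a` and `c ≤ b`. -/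
def sigmaRel (a b : S) : Prop := ∃ c : S, nle c a ∧ nle c b

/-- The elementwise product of two subsets. -/
def setMul (A B : Set S) : Set S := {x : S | ∃ a ∈ A, ∃ b ∈ B, x = a * b}

/-- The elementwise inverse `A⁻¹` of a subset. -/
def setInv (inv : S → S) (A : Set S) : Set S := inv '' A

/-- An atlas: a subset `A` with `A·A⁻¹·A = A`. -/
def IsAtlas (inv : S → S) (A : Set S) : Prop := setMul (setMul A (setInv inv A)) A = A

/-- A (down-)directed subset: nonempty, and any two elements have a common
lower bound inside it. -/
def IsDirectedSet (A : Set S) : Prop :=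
  A.Nonempty ∧ ∀ a ∈ A, ∀ b ∈ A, ∃ c ∈ A, nle c a ∧ nle c b

/-- An action of `S` on `X` by partial maps, axioms (A1) and (A2). -/
def IsAction (act : S → X → Option X) : Prop :=
  (∀ e : S, e * e = e → ∀ x y : X, act e x = some y → y = x) ∧
    (∀ (s t : S) (x : X), act (s * t) x = (act t x).bind (act s))

/-- Transitivity of an action. -/
def IsTransitiveAct (act : S → X → Option X) : Prop :=
  ∀ x y : X, ∃ s : S, act s x = some y

/-- Effectiveness of an action: every point is in the domain of some element. -/
def IsEffectiveAct (act : S → X → Option X) : Prop :=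
  ∀ x : X, ∃ (s : S) (x' : X), act s x = some x'

/-- The stabilizer of a point. -/
def stab (act : S → X → Option X) (x : X) : Set S := {s : S | act s x = some x}

/-- A morphism of `S`-actions. -/
def IsMorphism (actX : S → X → Option X) (actY : S → Y → Option Y) (α : X → Y) : Prop :=
  ∀ (s : S) (x x' : X), actX s x = some x' → actY s (α x) = some (α x')

/-- A strong morphism of `S`-actions. -/
def IsStrongMorphism (actX : S → X → Option X) (actY : S → Y → Option Y)
    (α : X → Y) : Prop :=
  IsMorphism actX actY α ∧
    ∀ (s : S) (x : X) (y' : Y), actY s (α x) = some y' → ∃ x' : X, actX s x = some x'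

end Defs

/-!
Everything rests on the commuting of idempotents. It makes inverses unique, so that
`inv (a * b) = inv b * inv a` and `inv e = e` for idempotent `e`, and it lets an idempotent
pass from the right of `b` to its left as the idempotent `b * f * inv b`. Hence the natural
order is compatible with multiplication and inversion, so the upward closure of a
multiplicatively closed set of idempotents is a closed inverse subsemigroup, whose
idempotents are exactly the original set when that set is a filter.
-/

namespace IsInvSgp

variable {S : Type*} [Semigroup S] {inv : S → S}

lemma commute_of_isIdempotentElem (hS : IsInvSgp S inv) {e f : S} (he : IsIdempotentElem e)
    (hf : IsIdempotentElem f) : Commute e f :=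
  hS.idem_comm e f he hf

lemma isIdempotentElem_mul (hS : IsInvSgp S inv) {e f : S} (he : IsIdempotentElem e)
    (hf : IsIdempotentElem f) : IsIdempotentElem (e * f) :=
  he.mul_of_commute (hS.commute_of_isIdempotentElem he hf) hf

lemma isIdempotentElem_mul_inv (hS : IsInvSgp S inv) (a : S) : IsIdempotentElem (a * inv a) := by
  rw [IsIdempotentElem, ← mul_assoc, hS.mul_inv_mul]

lemma isIdempotentElem_inv_mul (hS : IsInvSgp S inv) (a : S) : IsIdempotentElem (inv a * a) := by
  rw [IsIdempotentElem, ← mul_assoc, hS.inv_mul_inv]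

/-- Inverses are unique, because `x * a` commutes with `inv a * a` and `a * x` with `a * inv a`. -/
lemma eq_inv_of_mul_mul (hS : IsInvSgp S inv) {a x : S} (h₁ : a * x * a = a)
    (h₂ : x * a * x = x) : x = inv a := by
  have hxa : IsIdempotentElem (x * a) := by rw [IsIdempotentElem, ← mul_assoc, h₂]
  have hax : IsIdempotentElem (a * x) := by rw [IsIdempotentElem, ← mul_assoc, h₁]
  have hya := hS.isIdempotentElem_inv_mul a
  have hay := hS.isIdempotentElem_mul_inv a
  have hx : x = inv a * a * x :=
    calc x = x * (a * inv a * a) * x := by rw [hS.mul_inv_mul, h₂]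
      _ = (x * a) * (inv a * a) * x := by simp only [mul_assoc]
      _ = (inv a * a) * (x * a) * x := by rw [(hS.commute_of_isIdempotentElem hxa hya).eq]
      _ = inv a * (a * x * a) * x := by simp only [mul_assoc]
      _ = inv a * a * x := by rw [h₁]
  have hy : inv a = inv a * a * x :=
    calc inv a = inv a * (a * x * a) * inv a := by rw [h₁, hS.inv_mul_inv]
      _ = inv a * ((a * x) * (a * inv a)) := by simp only [mul_assoc]
      _ = inv a * ((a * inv a) * (a * x)) := by
          rw [(hS.commute_of_isIdempotentElem hax hay).eq]
      _ = (inv a * a * inv a) * a * x := by simp only [mul_assoc]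
      _ = inv a * a * x := by rw [hS.inv_mul_inv]
  rw [hx, ← hy]

lemma inv_inv (hS : IsInvSgp S inv) (a : S) : inv (inv a) = a :=
  (hS.eq_inv_of_mul_mul (hS.inv_mul_inv a) (hS.mul_inv_mul a)).symm

lemma inv_eq_self (hS : IsInvSgp S inv) {e : S} (he : IsIdempotentElem e) : inv e = e :=
  (hS.eq_inv_of_mul_mul (by rw [he.eq, he.eq]) (by rw [he.eq, he.eq])).symm

lemma inv_mul_rev (hS : IsInvSgp S inv) (a b : S) : inv (a * b) = inv b * inv a := by
  have hbb := hS.isIdempotentElem_mul_inv b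
  have haa := hS.isIdempotentElem_inv_mul a
  refine (hS.eq_inv_of_mul_mul ?_ ?_).symm
  · calc a * b * (inv b * inv a) * (a * b)
        = a * ((b * inv b) * (inv a * a)) * b := by simp only [mul_assoc]
      _ = a * ((inv a * a) * (b * inv b)) * b := by
          rw [(hS.commute_of_isIdempotentElem hbb haa).eq]
      _ = (a * inv a * a) * (b * inv b * b) := by simp only [mul_assoc]
      _ = a * b := by rw [hS.mul_inv_mul, hS.mul_inv_mul]
  · calc inv b * inv a * (a * b) * (inv b * inv a)
        = inv b * ((inv a * a) * (b * inv b)) * inv a := by simp only [mul_assoc]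
      _ = inv b * ((b * inv b) * (inv a * a)) * inv a := by
          rw [(hS.commute_of_isIdempotentElem haa hbb).eq]
      _ = (inv b * b * inv b) * (inv a * a * inv a) := by simp only [mul_assoc]
      _ = inv b * inv a := by rw [hS.inv_mul_inv, hS.inv_mul_inv]

lemma mul_eq_conj_mul (hS : IsInvSgp S inv) (b : S) {f : S} (hf : IsIdempotentElem f) :
    b * f = b * f * inv b * b :=
  calc b * f = (b * inv b * b) * f := by rw [hS.mul_inv_mul]
    _ = b * ((inv b * b) * f) := by simp only [mul_assoc]
    _ = b * (f * (inv b * b)) := by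
        rw [(hS.commute_of_isIdempotentElem (hS.isIdempotentElem_inv_mul b) hf).eq]
    _ = b * f * inv b * b := by simp only [mul_assoc]

lemma isIdempotentElem_conj (hS : IsInvSgp S inv) (s : S) {f : S} (hf : IsIdempotentElem f) :
    IsIdempotentElem (s * f * inv s) :=
  calc s * f * inv s * (s * f * inv s) = (s * f * inv s * s) * f * inv s := by
        simp only [mul_assoc]
    _ = s * f * f * inv s := by rw [← hS.mul_eq_conj_mul s hf]
    _ = s * f * inv s := by rw [hf.mul_mul_self]

lemma isIdempotentElem_inv_conj (hS : IsInvSgp S inv) (s : S) {f : S}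
    (hf : IsIdempotentElem f) : IsIdempotentElem (inv s * f * s) := by
  simpa only [hS.inv_inv] using hS.isIdempotentElem_conj (inv s) hf

lemma nle_refl (hS : IsInvSgp S inv) (a : S) : nle a a :=
  ⟨a * inv a, hS.isIdempotentElem_mul_inv a, (hS.mul_inv_mul a).symm⟩

lemma nle_trans (hS : IsInvSgp S inv) {a b c : S} (hab : nle a b) (hbc : nle b c) : nle a c := by
  obtain ⟨e, he, rfl⟩ := hab
  obtain ⟨f, hf, rfl⟩ := hbc
  exact ⟨e * f, hS.isIdempotentElem_mul he hf, (mul_assoc e f c).symm⟩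

lemma nle_mul (hS : IsInvSgp S inv) {a b c d : S} (hab : nle a b) (hcd : nle c d) :
    nle (a * c) (b * d) := by
  obtain ⟨e, he, rfl⟩ := hab
  obtain ⟨f, hf, rfl⟩ := hcd
  refine ⟨e * (b * f * inv b), hS.isIdempotentElem_mul he (hS.isIdempotentElem_conj b hf), ?_⟩
  calc e * b * (f * d) = e * (b * f) * d := by simp only [mul_assoc]
    _ = e * (b * f * inv b * b) * d := by rw [← hS.mul_eq_conj_mul b hf]
    _ = e * (b * f * inv b) * (b * d) := by simp only [mul_assoc]

lemma nle_inv (hS : IsInvSgp S inv) {a b : S} (hab : nle a b) : nle (inv a) (inv b) := by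
  obtain ⟨e, he, rfl⟩ := hab
  refine ⟨inv b * e * inv (inv b), hS.isIdempotentElem_conj (inv b) he, ?_⟩
  rw [hS.inv_mul_rev, hS.inv_eq_self he]
  exact hS.mul_eq_conj_mul (inv b) he

lemma up_up (hS : IsInvSgp S inv) (A : Set S) : up (up A) = up A :=
  Set.Subset.antisymm (fun _ ⟨_, ⟨a, ha, hat⟩, hts⟩ => ⟨a, ha, hS.nle_trans hat hts⟩)
    fun s hs => ⟨s, hs, hS.nle_refl s⟩

end IsInvSgp

section

variable {S : Type*} [Semigroup S] {inv : S → S}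

lemma up_mono {A B : Set S} (hAB : A ⊆ B) : up A ⊆ up B :=
  fun _ ⟨a, ha, has⟩ => ⟨a, hAB ha, has⟩

lemma isClosedInvSub_up (hS : IsInvSgp S inv) {F : Set S} (hidem : ∀ e ∈ F, e * e = e)
    (hmul : ∀ e ∈ F, ∀ f ∈ F, e * f ∈ F) : IsClosedInvSub inv (up F) := by
  refine ⟨?_, ?_, hS.up_up F⟩
  · rintro a ⟨e, he, hea⟩ b ⟨f, hf, hfb⟩
    exact ⟨e * f, hmul e he f hf, hS.nle_mul hea hfb⟩
  · rintro a ⟨e, he, hea⟩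
    refine ⟨e, he, ?_⟩
    simpa only [hS.inv_eq_self (hidem e he)] using hS.nle_inv hea

lemma idemSet_up {F : Set S} (hidem : ∀ e ∈ F, e * e = e)
    (hupw : ∀ e ∈ F, ∀ f : S, f * f = f → nle e f → f ∈ F) : idemSet (up F) = F :=
  Set.Subset.antisymm (fun _ ⟨⟨e, he, hes⟩, hs⟩ => hupw e he _ hs hes)
    fun e he => ⟨⟨e, he, e, hidem e he, (hidem e he).symm⟩, hidem e he⟩

namespace IsClosedInvSub

variable {H : Set S}

lemma up_idemSet_subset (hH : IsClosedInvSub inv H) : up (idemSet H) ⊆ H :=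
  (up_mono (Set.sep_subset H _)).trans hH.2.2.subset

lemma isFilterE_idemSet (hS : IsInvSgp S inv) (hne : H.Nonempty) (hH : IsClosedInvSub inv H) :
    IsFilterE (idemSet H) := by
  obtain ⟨hmul, hinv, hup⟩ := hH
  obtain ⟨a, ha⟩ := hne
  refine ⟨⟨a * inv a, hmul a ha _ (hinv a ha), hS.isIdempotentElem_mul_inv a⟩,
    fun e he => he.2, ?_, ?_⟩
  · rintro e ⟨heH, he⟩ f ⟨hfH, hf⟩
    exact ⟨hmul e heH f hfH, hS.isIdempotentElem_mul he hf⟩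
  · rintro e ⟨heH, -⟩ f hf hef
    exact ⟨hup ▸ ⟨e, heH, hef⟩, hf⟩

lemma subset_fbar (hS : IsInvSgp S inv) (hH : IsClosedInvSub inv H) :
    H ⊆ fbar inv (idemSet H) := by
  obtain ⟨hmul, hinv, -⟩ := hH
  rintro s hs f ⟨hfH, hf⟩
  exact ⟨⟨hmul _ (hmul _ (hinv s hs) f hfH) s hs, hS.isIdempotentElem_inv_conj s hf⟩,
    ⟨hmul _ (hmul s hs f hfH) _ (hinv s hs), hS.isIdempotentElem_conj s hf⟩⟩

end IsClosedInvSub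

end

/-- The set `F` of idempotents of a closed inverse subsemigroup `H`
is a filter in `E(S)` and `F↑ ⊆ H ⊆ F̄`; moreover `F↑` is itself a closed inverse
subsemigroup with set of idempotents `F`. -/
theorem stmt5 {S : Type*} [Semigroup S] (inv : S → S) (hS : IsInvSgp S inv)
    (H : Set S) (hne : H.Nonempty) (hH : IsClosedInvSub inv H) :
    IsFilterE (idemSet H) ∧
    up (idemSet H) ⊆ H ∧
    H ⊆ fbar inv (idemSet H) ∧
    IsClosedInvSub inv (up (idemSet H)) ∧
    idemSet (up (idemSet H)) = idemSet H := by
  have hF := hH.isFilterE_idemSet hS hne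
  exact ⟨hF, hH.up_idemSet_subset, hH.subset_fbar hS, isClosedInvSub_up hS hF.2.1 hF.2.2.1,
    idemSet_up hF.2.1 hF.2.2.2⟩

end InvSgpPaper
end

section
/- Let S be an inverse semigroup acting transitively on sets X and Y, let x ∈ X and y ∈ Y, and let S_x and S_y be the stabilizers of x and y. Then there exists a strong morphism α : X → Y of S-actions with α(x) = y if and only if S_x ⊆ S_y and the set of idempotents in S_x equals the set of idempotents in S_y; moreover any two strong morphisms from X to Y sending x to y are equal. -/
/-!
A strong morphism sending `x` to `y` must send `s·x` to `s·y`; by transitivity every point of `X`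
has this form, which gives uniqueness and the necessity of `S_x ⊆ S_y`, while strongness applied
to idempotents gives `E(S_y) ⊆ E(S_x)`. Conversely `α(s·x) := s·y` is defined because
`s⁻¹s ∈ S_x ⊆ S_y`, well defined because `s·x = t·x` forces `t⁻¹s ∈ S_y`, and strong because
`E(S_y) ⊆ E(S_x)` transports domains of definition back from `Y` to `X`.
-/

namespace InvSgpPaper

namespace IsInvSgp

variable {S : Type*} [Semigroup S] {inv : S → S}

lemma inv_mul_idem (hS : IsInvSgp S inv) (a : S) : inv a * a * (inv a * a) = inv a * a := by
  rw [mul_assoc, ← mul_assoc a, hS.mul_inv_mul a]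

lemma mul_inv_idem (hS : IsInvSgp S inv) (a : S) : a * inv a * (a * inv a) = a * inv a := by
  rw [mul_assoc, ← mul_assoc (inv a), hS.inv_mul_inv a]

end IsInvSgp

namespace IsAction

variable {S X : Type*} [Semigroup S] {act : S → X → Option X}

lemma act_mul_of_eq_some (hA : IsAction act) {s t : S} {p q : X} (h : act t p = some q) :
    act (s * t) p = act s q := by
  rw [hA.2, h, Option.bind_some]

lemma exists_eq_some_of_mul (hA : IsAction act) {s t : S} {p r : X}
    (h : act (s * t) p = some r) : ∃ q, act t p = some q := by
  rw [hA.2] at h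
  obtain ⟨q, hq, -⟩ := Option.bind_eq_some_iff.mp h
  exact ⟨q, hq⟩

variable {inv : S → S}

lemma inv_mul_mem_stab (hA : IsAction act) (hS : IsInvSgp S inv) {u : S} {p q : X}
    (h : act u p = some q) : inv u * u ∈ stab act p := by
  have hu : act (u * (inv u * u)) p = some q := by rw [← mul_assoc, hS.mul_inv_mul, h]
  obtain ⟨w, hw⟩ := hA.exists_eq_some_of_mul hu
  rwa [hA.1 _ (hS.inv_mul_idem u) p w hw] at hw

lemma act_inv_of_eq_some (hA : IsAction act) (hS : IsInvSgp S inv) {u : S} {p q : X}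
    (h : act u p = some q) : act (inv u) q = some p := by
  rw [← hA.act_mul_of_eq_some h]
  exact hA.inv_mul_mem_stab hS h

end IsAction

section Morphisms

variable {S X Y : Type*} {actX : S → X → Option X} {actY : S → Y → Option Y} {α β : X → Y}

lemma IsMorphism.stab_subset (hα : IsMorphism actX actY α) (x : X) :
    stab actX x ⊆ stab actY (α x) :=
  fun s hs => hα s x x hs

lemma IsStrongMorphism.idemSet_stab_eq [Semigroup S] (hX : IsAction actX) (hα : IsStrongMorphism actX actY α)
    (x : X) : idemSet (stab actX x) = idemSet (stab actY (α x)) := by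
  refine Set.Subset.antisymm (fun e he => ⟨hα.1.stab_subset x he.1, he.2⟩) ?_
  rintro e ⟨he, hee⟩
  obtain ⟨x', hx'⟩ := hα.2 e x (α x) he
  rw [hX.1 e hee x x' hx'] at hx'
  exact ⟨hx', hee⟩

lemma IsMorphism.eq_of_apply_eq (hXt : IsTransitiveAct actX) (hα : IsMorphism actX actY α)
    (hβ : IsMorphism actX actY β) {x : X} (h : α x = β x) : α = β := by
  funext z
  obtain ⟨s, hs⟩ := hXt x z
  have hαs := hα s x z hs
  rw [h, hβ s x z hs] at hαs
  exact (Option.some.inj hαs).symm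

end Morphisms

section Construction

variable {S X Y : Type*} [Semigroup S] {inv : S → S} {actX : S → X → Option X}
  {actY : S → Y → Option Y} {x : X} {y : Y}

lemma exists_act_eq_some_of_stab_subset (hS : IsInvSgp S inv) (hX : IsAction actX)
    (hY : IsAction actY) (hsub : stab actX x ⊆ stab actY y) {s : S} {z : X}
    (hs : actX s x = some z) : ∃ w, actY s y = some w :=
  hY.exists_eq_some_of_mul (hsub (hX.inv_mul_mem_stab hS hs))

/-- If `s·x = t·x` then `t⁻¹s ∈ S_x ⊆ S_y`, so `s·y = (tt⁻¹)s·y = t·y` since `tt⁻¹` acts as a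
partial identity. -/
lemma act_eq_of_stab_subset (hS : IsInvSgp S inv) (hX : IsAction actX) (hY : IsAction actY)
    (hsub : stab actX x ⊆ stab actY y) {s t : S} {z : X} (hs : actX s x = some z)
    (ht : actX t x = some z) : actY s y = actY t y := by
  obtain ⟨w, hw⟩ := exists_act_eq_some_of_stab_subset hS hX hY hsub hs
  obtain ⟨w', hw'⟩ := exists_act_eq_some_of_stab_subset hS hX hY hsub ht
  have hts : inv t * s ∈ stab actY y := hsub <| by
    show actX (inv t * s) x = some x
    rw [hX.act_mul_of_eq_some hs]
    exact hX.act_inv_of_eq_some hS ht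
  have hidem : actY (t * inv t) w = some w' := by
    rw [← hY.act_mul_of_eq_some hw, mul_assoc, hY.act_mul_of_eq_some hts, hw']
  rw [hw, hw', hY.1 _ (hS.mul_inv_idem t) w w' hidem]

lemma exists_isMorphism_of_stab_subset (hS : IsInvSgp S inv) (hX : IsAction actX)
    (hY : IsAction actY) (hXt : IsTransitiveAct actX) (hsub : stab actX x ⊆ stab actY y) :
    ∃ α : X → Y, IsMorphism actX actY α ∧ α x = y := by
  choose g hg using hXt x
  choose α hα using fun z => exists_act_eq_some_of_stab_subset hS hX hY hsub (hg z)
  refine ⟨α, fun s z z' hs => ?_, Option.some.inj ((hα x).symm.trans (hsub (hg x)))⟩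
  have hsg : actX (s * g z) x = some z' := by rw [hX.act_mul_of_eq_some (hg z), hs]
  rw [← hY.act_mul_of_eq_some (hα z), act_eq_of_stab_subset hS hX hY hsub hsg (hg z'), hα z']

/-- If `s·α(t·x)` is defined then `(st)⁻¹(st) ∈ E(S_y) ⊆ E(S_x)`, so `s·(t·x)` is defined. -/
lemma isStrongMorphism_of_idemSet_stab_subset (hS : IsInvSgp S inv) (hX : IsAction actX)
    (hY : IsAction actY) (hXt : IsTransitiveAct actX) {α : X → Y}
    (hα : IsMorphism actX actY α) (hαx : α x = y)
    (hidem : idemSet (stab actY y) ⊆ idemSet (stab actX x)) :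
    IsStrongMorphism actX actY α := by
  refine ⟨hα, fun s z y' hy => ?_⟩
  obtain ⟨t, ht⟩ := hXt x z
  have hst : actY (s * t) y = some y' := by
    rw [← hαx, hY.act_mul_of_eq_some (hα t x z ht), hy]
  have hdom : inv (s * t) * (s * t) ∈ stab actX x :=
    (hidem ⟨hY.inv_mul_mem_stab hS hst, hS.inv_mul_idem _⟩).1
  obtain ⟨q, hq⟩ := hX.exists_eq_some_of_mul hdom
  exact ⟨q, by rwa [hX.act_mul_of_eq_some ht] at hq⟩

end Construction

theorem stmt9_general {S X Y : Type*} [Semigroup S] (inv : S → S) (hS : IsInvSgp S inv)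
    (actX : S → X → Option X) (actY : S → Y → Option Y)
    (hX : IsAction actX) (hY : IsAction actY)
    (hXt : IsTransitiveAct actX)
    (x : X) (y : Y) :
    ((∃ α : X → Y, IsStrongMorphism actX actY α ∧ α x = y) ↔
      (stab actX x ⊆ stab actY y ∧ idemSet (stab actX x) = idemSet (stab actY y))) ∧
    (∀ α β : X → Y, IsStrongMorphism actX actY α → IsStrongMorphism actX actY β →
      α x = y → β x = y → α = β) := by
  refine ⟨⟨?_, ?_⟩, fun α β hα hβ hαx hβx => hα.1.eq_of_apply_eq hXt hβ.1 (hαx.trans hβx.symm)⟩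
  · rintro ⟨α, hα, rfl⟩
    exact ⟨hα.1.stab_subset x, hα.idemSet_stab_eq hX x⟩
  · rintro ⟨hsub, hidem⟩
    obtain ⟨α, hα, hαx⟩ := exists_isMorphism_of_stab_subset hS hX hY hXt hsub
    exact ⟨α, isStrongMorphism_of_idemSet_stab_subset hS hX hY hXt hα hαx hidem.ge, hαx⟩

/-- There is a (unique) strong morphism of transitive `S`-actions
sending `x` to `y` iff `S_x ⊆ S_y` and `E(S_x) = E(S_y)`. -/
theorem stmt9 {S X Y : Type*} [Semigroup S] (inv : S → S) (hS : IsInvSgp S inv)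
    (actX : S → X → Option X) (actY : S → Y → Option Y)
    (hX : IsAction actX) (hY : IsAction actY)
    (hXt : IsTransitiveAct actX) (hYt : IsTransitiveAct actY)
    (x : X) (y : Y) :
    ((∃ α : X → Y, IsStrongMorphism actX actY α ∧ α x = y) ↔
      (stab actX x ⊆ stab actY y ∧ idemSet (stab actX x) = idemSet (stab actY y))) ∧
    (∀ α β : X → Y, IsStrongMorphism actX actY α → IsStrongMorphism actX actY β →
      α x = y → β x = y → α = β) :=
  stmt9_general inv hS actX actY hX hY hXt x y

end InvSgpPaper
end

section
/- Let S be an inverse semigroup acting transitively on a set Y, let y ∈ Y, let F be the set of idempotents of the stabilizer S_y, and let H = F↑. Let X be the set of left cosets of H in S, with the partial action a · (sH)↑ = ((a·s)H)↑ defined whenever inv(a·s)·(a·s) ∈ H. Then this is a transitive action of S on X (satisfying axioms (A1) and (A2)), the stabilizer of the point H ∈ X equals H, and there exists a surjective strong morphism α : X → Y of S-actions with α(H) = y. Hence every transitive action of S is strongly covered by a universal one. -/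
namespace InvSgpPaper

/-!
The upward closure `H` of the idempotents of `S_y` is a closed inverse subsemigroup contained
in `S_y`. For such `H`, `x ∈ (sH)↑ ↔ inv s * x ∈ H`, so `(sH)↑ = (tH)↑` exactly when
`inv s * t ∈ H`; this criterion makes `a · (sH)↑ = ((a * s)H)↑` well defined and yields (A1),
(A2), transitivity and `S_H = H`. The map `(sH)↑ ↦ s · y` is well defined because `H ⊆ S_y`,
and it is strong because `s · y` being defined forces `inv s * s ∈ E(S_y) ⊆ H`.
-/

section InverseSemigroup

variable {S : Type*} [Semigroup S] {inv : S → S}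

theorem IsInvSgp.inv_mul_self_idem (hS : IsInvSgp S inv) (a : S) :
    inv a * a * (inv a * a) = inv a * a := by
  rw [← mul_assoc, hS.inv_mul_inv]

theorem IsInvSgp.mul_inv_self_idem (hS : IsInvSgp S inv) (a : S) :
    a * inv a * (a * inv a) = a * inv a := by
  rw [← mul_assoc, hS.mul_inv_mul]

theorem IsInvSgp.mul_idem (hS : IsInvSgp S inv) {e f : S} (he : e * e = e) (hf : f * f = f) :
    e * f * (e * f) = e * f :=
  calc e * f * (e * f) = e * (f * e) * f := by simp only [mul_assoc]
    _ = e * (e * f) * f := by rw [← hS.idem_comm e f he hf]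
    _ = e * f := by rw [← mul_assoc, he, mul_assoc, hf]

theorem IsInvSgp.eq_inv_of (hS : IsInvSgp S inv) {a x : S}
    (h₁ : a * x * a = a) (h₂ : x * a * x = x) : x = inv a := by
  have hxa : x * a * (x * a) = x * a := by rw [← mul_assoc, h₂]
  have hax : a * x * (a * x) = a * x := by rw [← mul_assoc, h₁]
  have hx₁ : x = inv a * a * x :=
    calc x = x * a * x := h₂.symm
      _ = x * a * (inv a * a) * x := by
          rw [mul_assoc x a (inv a * a), ← mul_assoc a (inv a) a, hS.mul_inv_mul]
      _ = inv a * a * (x * a) * x := by rw [hS.idem_comm _ _ hxa (hS.inv_mul_self_idem a)]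
      _ = inv a * a * x := by rw [mul_assoc (inv a * a), h₂]
  have hx₂ : x = x * (a * inv a) :=
    calc x = x * (a * x) := by rw [← mul_assoc, h₂]
      _ = x * (a * inv a * (a * x)) := by rw [← mul_assoc (a * inv a), hS.mul_inv_mul]
      _ = x * (a * x * (a * inv a)) := by rw [hS.idem_comm _ _ (hS.mul_inv_self_idem a) hax]
      _ = x * (a * inv a) := by rw [← mul_assoc x (a * x), ← mul_assoc x a x, h₂]
  calc x = inv a * a * (x * (a * inv a)) := by rw [← hx₂, ← hx₁]
    _ = inv a * (a * x * a) * inv a := by simp only [mul_assoc]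
    _ = inv a := by rw [h₁, hS.inv_mul_inv]

theorem IsInvSgp.inv_inv_s12 (hS : IsInvSgp S inv) (a : S) : inv (inv a) = a :=
  (hS.eq_inv_of (hS.inv_mul_inv a) (hS.mul_inv_mul a)).symm

theorem IsInvSgp.inv_of_idem (hS : IsInvSgp S inv) {e : S} (he : e * e = e) : inv e = e :=
  (hS.eq_inv_of (by rw [he, he]) (by rw [he, he])).symm

theorem IsInvSgp.inv_mul_rev_s12 (hS : IsInvSgp S inv) (a b : S) : inv (a * b) = inv b * inv a := by
  have hc : b * inv b * (inv a * a) = inv a * a * (b * inv b) :=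
    hS.idem_comm _ _ (hS.mul_inv_self_idem b) (hS.inv_mul_self_idem a)
  refine (hS.eq_inv_of ?_ ?_).symm
  · calc a * b * (inv b * inv a) * (a * b) = a * (b * inv b * (inv a * a)) * b := by
          simp only [mul_assoc]
      _ = a * inv a * a * (b * inv b * b) := by rw [hc]; simp only [mul_assoc]
      _ = a * b := by rw [hS.mul_inv_mul, hS.mul_inv_mul]
  · calc inv b * inv a * (a * b) * (inv b * inv a)
          = inv b * (inv a * a * (b * inv b)) * inv a := by simp only [mul_assoc]
      _ = inv b * b * inv b * (inv a * a * inv a) := by rw [← hc]; simp only [mul_assoc]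
      _ = inv b * inv a := by rw [hS.inv_mul_inv, hS.inv_mul_inv]

theorem IsInvSgp.nle_refl_s12 (hS : IsInvSgp S inv) (a : S) : nle a a :=
  ⟨a * inv a, hS.mul_inv_self_idem a, (hS.mul_inv_mul a).symm⟩

theorem IsInvSgp.nle_trans_s12 (hS : IsInvSgp S inv) {a b c : S} (hab : nle a b) (hbc : nle b c) :
    nle a c := by
  obtain ⟨e, he, rfl⟩ := hab
  obtain ⟨f, hf, rfl⟩ := hbc
  exact ⟨e * f, hS.mul_idem he hf, (mul_assoc e f c).symm⟩

theorem IsInvSgp.mul_nle_self (hS : IsInvSgp S inv) {e : S} (he : e * e = e) (a : S) :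
    nle (a * e) a := by
  have hc : e * (inv a * a) = inv a * a * e := hS.idem_comm _ _ he (hS.inv_mul_self_idem a)
  refine ⟨a * e * inv a, ?_, ?_⟩
  · calc a * e * inv a * (a * e * inv a) = a * (e * (inv a * a)) * e * inv a := by
          simp only [mul_assoc]
      _ = a * inv a * a * (e * e) * inv a := by rw [hc]; simp only [mul_assoc]
      _ = a * e * inv a := by rw [hS.mul_inv_mul, he]
  · calc a * e = a * inv a * a * e := by rw [hS.mul_inv_mul]
      _ = a * (inv a * a * e) := by simp only [mul_assoc]
      _ = a * e * inv a * a := by rw [← hc]; simp only [mul_assoc]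

theorem nle_mul_right {a b : S} (h : nle a b) (c : S) : nle (a * c) (b * c) := by
  obtain ⟨e, he, rfl⟩ := h
  exact ⟨e, he, mul_assoc e b c⟩

theorem IsInvSgp.nle_mul_left (hS : IsInvSgp S inv) (c : S) {a b : S} (h : nle a b) :
    nle (c * a) (c * b) := by
  obtain ⟨e, he, rfl⟩ := h
  rw [← mul_assoc]
  exact nle_mul_right (hS.mul_nle_self he c) b

theorem IsInvSgp.nle_inv_s12 (hS : IsInvSgp S inv) {a b : S} (h : nle a b) : nle (inv a) (inv b) := by
  obtain ⟨e, he, rfl⟩ := h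
  rw [hS.inv_mul_rev_s12, hS.inv_of_idem he]
  exact hS.mul_nle_self he _

theorem subset_up (hS : IsInvSgp S inv) (A : Set S) : A ⊆ up A :=
  fun a ha => ⟨a, ha, hS.nle_refl_s12 a⟩

end InverseSemigroup

section Cosets

variable {S : Type*} [Semigroup S] {inv : S → S} {H : Set S}

theorem IsClosedInvSub.mem_of_nle (hH : IsClosedInvSub inv H) {a b : S} (ha : a ∈ H)
    (hab : nle a b) : b ∈ H := by
  rw [← hH.2.2]
  exact ⟨a, ha, hab⟩

theorem IsClosedInvSub.inv_mul_self_mem (hH : IsClosedInvSub inv H) {s : S} (hs : s ∈ H) :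
    inv s * s ∈ H :=
  hH.1 _ (hH.2.1 _ hs) _ hs

theorem inv_mul_mem_symm (hS : IsInvSgp S inv) (hH : IsClosedInvSub inv H) {s t : S}
    (h : inv s * t ∈ H) : inv t * s ∈ H := by
  simpa only [hS.inv_mul_rev_s12, hS.inv_inv_s12] using hH.2.1 _ h

theorem inv_mul_mem_trans (hS : IsInvSgp S inv) (hH : IsClosedInvSub inv H) {u v x : S}
    (huv : inv u * v ∈ H) (hvx : inv v * x ∈ H) : inv u * x ∈ H := by
  have hprod : inv u * v * (inv v * x) = inv u * (v * inv v * x) := by simp only [mul_assoc]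
  exact hH.mem_of_nle (hprod ▸ hH.1 _ huv _ hvx)
    (hS.nle_mul_left _ ⟨_, hS.mul_inv_self_idem v, rfl⟩)

theorem mem_lcoset_iff (hS : IsInvSgp S inv) (hH : IsClosedInvSub inv H) {s : S}
    (hs : inv s * s ∈ H) {x : S} : x ∈ lcoset s H ↔ inv s * x ∈ H := by
  constructor
  · rintro ⟨h, hh, hle⟩
    refine hH.mem_of_nle ?_ (hS.nle_mul_left (inv s) hle)
    rw [← mul_assoc]
    exact hH.1 _ hs _ hh
  · intro hx
    exact ⟨inv s * x, hx, s * inv s, hS.mul_inv_self_idem s, (mul_assoc _ _ _).symm⟩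

theorem mem_lcoset_self (hS : IsInvSgp S inv) (hH : IsClosedInvSub inv H) {s : S}
    (hs : inv s * s ∈ H) : s ∈ lcoset s H :=
  (mem_lcoset_iff hS hH hs).2 hs

theorem mem_of_lcoset_eq_self (hS : IsInvSgp S inv) (hH : IsClosedInvSub inv H) {s : S}
    (hs : inv s * s ∈ H) (h : lcoset s H = H) : s ∈ H :=
  h ▸ mem_lcoset_self hS hH hs

theorem lcoset_eq_lcoset_iff (hS : IsInvSgp S inv) (hH : IsClosedInvSub inv H) {s t : S}
    (hs : inv s * s ∈ H) (ht : inv t * t ∈ H) :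
    lcoset s H = lcoset t H ↔ inv s * t ∈ H := by
  constructor
  · intro h
    rw [← mem_lcoset_iff hS hH hs, h]
    exact mem_lcoset_self hS hH ht
  · intro hst
    ext x
    rw [mem_lcoset_iff hS hH hs, mem_lcoset_iff hS hH ht]
    exact ⟨inv_mul_mem_trans hS hH (inv_mul_mem_symm hS hH hst), inv_mul_mem_trans hS hH hst⟩

theorem lcoset_eq_of_mem (hS : IsInvSgp S inv) (hH : IsClosedInvSub inv H) {s : S}
    (hs : s ∈ H) : lcoset s H = H := by
  ext x
  rw [mem_lcoset_iff hS hH (hH.inv_mul_self_mem hs)]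
  refine ⟨fun hx => hH.mem_of_nle (hH.1 _ hs _ hx) ?_, hH.1 _ (hH.2.1 _ hs) x⟩
  rw [← mul_assoc]
  exact ⟨_, hS.mul_inv_self_idem s, rfl⟩

theorem exists_lcoset_eq_self (hS : IsInvSgp S inv) (hH : IsClosedInvSub inv H)
    (hne : H.Nonempty) : ∃ s : S, inv s * s ∈ H ∧ H = lcoset s H := by
  obtain ⟨h, hh⟩ := hne
  exact ⟨h, hH.inv_mul_self_mem hh, (lcoset_eq_of_mem hS hH hh).symm⟩

theorem lcoset_mul_eq (hS : IsInvSgp S inv) (hH : IsClosedInvSub inv H) {a s s' : S}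
    (hs : inv s * s ∈ H) (hs' : inv s' * s' ∈ H) (hss' : lcoset s H = lcoset s' H)
    (has : inv (a * s) * (a * s) ∈ H) :
    inv (a * s') * (a * s') ∈ H ∧ lcoset (a * s) H = lcoset (a * s') H := by
  rw [lcoset_eq_lcoset_iff hS hH hs hs'] at hss'
  have hc : inv a * a * (s * inv s) = s * inv s * (inv a * a) :=
    hS.idem_comm _ _ (hS.inv_mul_self_idem a) (hS.mul_inv_self_idem s)
  have hmid : inv (a * s) * (a * s) * (inv s * s') = inv (a * s) * (a * s') := by
    rw [hS.inv_mul_rev_s12]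
    calc inv s * inv a * (a * s) * (inv s * s') = inv s * (inv a * a * (s * inv s)) * s' := by
          simp only [mul_assoc]
      _ = inv s * s * inv s * (inv a * a * s') := by rw [hc]; simp only [mul_assoc]
      _ = inv s * inv a * (a * s') := by rw [hS.inv_mul_inv]; simp only [mul_assoc]
  have hquot : inv (a * s) * (a * s') ∈ H := hmid ▸ hH.1 _ has _ hss'
  have hsq : inv (inv (a * s) * (a * s')) * (inv (a * s) * (a * s')) =
      inv (a * s') * (a * s * inv (a * s) * (a * s')) := by
    rw [hS.inv_mul_rev_s12, hS.inv_inv_s12]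
    simp only [mul_assoc]
  have hs'a : inv (a * s') * (a * s') ∈ H :=
    hH.mem_of_nle (hsq ▸ hH.inv_mul_self_mem hquot)
      (hS.nle_mul_left _ ⟨_, hS.mul_inv_self_idem _, rfl⟩)
  exact ⟨hs'a, (lcoset_eq_lcoset_iff hS hH has hs'a).2 hquot⟩

end Cosets

section Actions

variable {S X : Type*} [Semigroup S] {inv : S → S} {act : S → X → Option X}

theorem IsAction.inv_mul_self_mem_idemSet_stab (hact : IsAction act) (hS : IsInvSgp S inv)
    {s : S} {x z : X} (h : act s x = some z) : inv s * s ∈ idemSet (stab act x) := by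
  have h' : act (s * (inv s * s)) x = some z := by rw [← mul_assoc, hS.mul_inv_mul]; exact h
  rw [hact.2, Option.bind_eq_some_iff] at h'
  obtain ⟨w, hw, -⟩ := h'
  refine ⟨?_, hS.inv_mul_self_idem s⟩
  rwa [hact.1 _ (hS.inv_mul_self_idem s) _ _ hw] at hw

theorem IsAction.exists_eq_some_of_inv_mul_self_mem_stab (hact : IsAction act) {s : S} {x : X}
    (h : inv s * s ∈ stab act x) : ∃ z, act s x = some z := by
  have h' : act (inv s * s) x = some x := h
  rw [hact.2, Option.bind_eq_some_iff] at h'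
  obtain ⟨z, hz, -⟩ := h'
  exact ⟨z, hz⟩

theorem IsAction.mem_stab_of_nle (hact : IsAction act) {f h : S} {x : X}
    (hf : f ∈ stab act x) (hfh : nle f h) : h ∈ stab act x := by
  obtain ⟨e, he, rfl⟩ := hfh
  have h' : act (e * h) x = some x := hf
  rw [hact.2, Option.bind_eq_some_iff] at h'
  obtain ⟨w, hw, hew⟩ := h'
  rwa [← hact.1 e he w x hew] at hw

theorem IsAction.eq_of_inv_mul_mem_stab (hact : IsAction act) (hS : IsInvSgp S inv)
    {s t : S} {x : X} (hs : inv s * s ∈ stab act x) (hst : inv s * t ∈ stab act x) :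
    act t x = act s x := by
  obtain ⟨z, hz⟩ := hact.exists_eq_some_of_inv_mul_self_mem_stab hs
  have h : act (s * (inv s * t)) x = some z := by
    rw [hact.2, show act (inv s * t) x = some x from hst, Option.bind_some, hz]
  rw [← mul_assoc, hact.2, Option.bind_eq_some_iff] at h
  obtain ⟨w, hw, hsw⟩ := h
  rw [hw, hz, hact.1 _ (hS.mul_inv_self_idem s) _ _ hsw]

theorem up_idemSet_stab_isClosedInvSub (hS : IsInvSgp S inv) (hact : IsAction act) (x : X) :
    IsClosedInvSub inv (up (idemSet (stab act x))) := by
  refine ⟨?_, ?_, ?_⟩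
  · rintro a ⟨f, ⟨hfx, hf⟩, hfa⟩ b ⟨g, ⟨hgx, hg⟩, hgb⟩
    refine ⟨f * g, ⟨?_, hS.mul_idem hf hg⟩,
      hS.nle_trans_s12 (hS.nle_mul_left f hgb) (nle_mul_right hfa b)⟩
    show act (f * g) x = some x
    rw [hact.2, show act g x = some x from hgx]
    exact hfx
  · rintro a ⟨f, hfE, hfa⟩
    refine ⟨f, hfE, ?_⟩
    simpa only [hS.inv_of_idem hfE.2] using hS.nle_inv_s12 hfa
  · refine (Set.Subset.antisymm ?_ (subset_up hS _))
    rintro a ⟨b, ⟨f, hf, hfb⟩, hba⟩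
    exact ⟨f, hf, hS.nle_trans_s12 hfb hba⟩

theorem up_idemSet_stab_subset (hact : IsAction act) (x : X) :
    up (idemSet (stab act x)) ⊆ stab act x :=
  fun _ ⟨_, hf, hfh⟩ => hact.mem_stab_of_nle hf.1 hfh

end Actions

section CosetAction

variable {S : Type*} [Semigroup S] {inv : S → S} {H : Set S}

abbrev CosetSpace (inv : S → S) (H : Set S) : Type _ :=
  {A : Set S // ∃ s : S, inv s * s ∈ H ∧ A = lcoset s H}

def CosetSpace.of {s : S} (hs : inv s * s ∈ H) : CosetSpace inv H :=
  ⟨lcoset s H, s, hs, rfl⟩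

open Classical in
noncomputable def cosetAct (inv : S → S) (H : Set S) (a : S) (A : CosetSpace inv H) :
    Option (CosetSpace inv H) :=
  if h : ∃ s : S, inv s * s ∈ H ∧ (A : Set S) = lcoset s H ∧ inv (a * s) * (a * s) ∈ H
  then
    some (CosetSpace.of h.choose_spec.2.2)
  else none

theorem cosetAct_eq_some_iff (hS : IsInvSgp S inv) (hH : IsClosedInvSub inv H) {a : S}
    {A B : CosetSpace inv H} :
    cosetAct inv H a A = some B ↔
      ∃ s : S, inv s * s ∈ H ∧ (A : Set S) = lcoset s H ∧
        inv (a * s) * (a * s) ∈ H ∧ (B : Set S) = lcoset (a * s) H := by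
  unfold cosetAct
  split_ifs with h
  · obtain ⟨hs₀, hA₀, has₀⟩ := h.choose_spec
    rw [Option.some_inj, Subtype.ext_iff]
    constructor
    · intro hB
      exact ⟨_, hs₀, hA₀, has₀, hB.symm⟩
    · rintro ⟨s, hs, hA, -, hB⟩
      rw [hB]
      exact (lcoset_mul_eq hS hH hs₀ hs (hA₀.symm.trans hA) has₀).2
  · simp only [false_iff]
    rintro ⟨s, hs, hA, has, -⟩
    exact h ⟨s, hs, hA, has⟩

theorem cosetAct_mul_eq_some_iff (hS : IsInvSgp S inv) (hH : IsClosedInvSub inv H) {a b : S}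
    {A C : CosetSpace inv H} :
    cosetAct inv H (a * b) A = some C ↔
      ∃ B, cosetAct inv H b A = some B ∧ cosetAct inv H a B = some C := by
  constructor
  · intro h
    obtain ⟨u, hu, hA, habu, hC⟩ := (cosetAct_eq_some_iff hS hH).1 h
    have hsq : inv (a * b * u) * (a * b * u) = inv (b * u) * (inv a * a * (b * u)) := by
      rw [mul_assoc a b u, hS.inv_mul_rev_s12 a]
      simp only [mul_assoc]
    have hbu : inv (b * u) * (b * u) ∈ H :=
      hH.mem_of_nle (hsq ▸ habu) (hS.nle_mul_left _ ⟨_, hS.inv_mul_self_idem a, rfl⟩)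
    refine ⟨CosetSpace.of hbu, (cosetAct_eq_some_iff hS hH).2 ⟨u, hu, hA, hbu, rfl⟩,
      (cosetAct_eq_some_iff hS hH).2 ⟨b * u, hbu, rfl, ?_, ?_⟩⟩
    · rwa [← mul_assoc a b u]
    · rw [hC, mul_assoc a b u]
  · rintro ⟨B, hB, hC⟩
    obtain ⟨u, hu, hA, hbu, hB⟩ := (cosetAct_eq_some_iff hS hH).1 hB
    obtain ⟨v, hv, hB', hav, hC⟩ := (cosetAct_eq_some_iff hS hH).1 hC
    obtain ⟨habu, hcoset⟩ := lcoset_mul_eq hS hH hv hbu (hB'.symm.trans hB) hav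
    exact (cosetAct_eq_some_iff hS hH).2
      ⟨u, hu, hA, by rwa [mul_assoc a b u], by rw [hC, hcoset, mul_assoc a b u]⟩

theorem isAction_cosetAct (hS : IsInvSgp S inv) (hH : IsClosedInvSub inv H) :
    IsAction (cosetAct inv H) := by
  refine ⟨fun e he A B h => ?_, fun a b A => ?_⟩
  · obtain ⟨s, hs, hA, hes, hB⟩ := (cosetAct_eq_some_iff hS hH).1 h
    have hquot : inv (e * s) * s = inv (e * s) * (e * s) := by
      simp only [hS.inv_mul_rev_s12, hS.inv_of_idem he, mul_assoc]
      rw [← mul_assoc e e s, he]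
    apply Subtype.ext
    rw [hB, hA, lcoset_eq_lcoset_iff hS hH hes hs, hquot]
    exact hes
  · apply Option.ext
    intro C
    rw [Option.bind_eq_some_iff]
    exact cosetAct_mul_eq_some_iff hS hH

theorem isTransitiveAct_cosetAct (hS : IsInvSgp S inv) (hH : IsClosedInvSub inv H) :
    IsTransitiveAct (cosetAct inv H) := by
  intro A B
  obtain ⟨s, hs, hA⟩ := A.2
  obtain ⟨t, ht, hB⟩ := B.2
  have hsq : inv (t * inv s * s) * (t * inv s * s) = inv s * s * (inv t * t) * (inv s * s) := by
    simp only [hS.inv_mul_rev_s12, hS.inv_inv_s12, mul_assoc]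
  have hts : inv (t * inv s * s) * (t * inv s * s) ∈ H := hsq ▸ hH.1 _ (hH.1 _ hs _ ht) _ hs
  refine ⟨t * inv s, (cosetAct_eq_some_iff hS hH).2 ⟨s, hs, hA, hts, ?_⟩⟩
  have hquot : inv t * (t * inv s * s) = inv t * t * (inv s * s) := by simp only [mul_assoc]
  rw [hB, lcoset_eq_lcoset_iff hS hH ht hts, hquot]
  exact hH.1 _ ht _ hs

theorem stab_cosetAct (hS : IsInvSgp S inv) (hH : IsClosedInvSub inv H) {A : CosetSpace inv H}
    (hA : (A : Set S) = H) : stab (cosetAct inv H) A = H := by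
  ext a
  constructor
  · intro ha
    obtain ⟨s, hs, hAs, has, hAas⟩ := (cosetAct_eq_some_iff hS hH).1 ha
    have hsH := mem_of_lcoset_eq_self hS hH hs (hAs.symm.trans hA)
    have hasH := mem_of_lcoset_eq_self hS hH has (hAas.symm.trans hA)
    refine hH.mem_of_nle (hH.1 _ hasH _ (hH.2.1 _ hsH)) ?_
    rw [mul_assoc]
    exact hS.mul_nle_self (hS.mul_inv_self_idem s) a
  · intro ha
    obtain ⟨s, hs, hAs⟩ := A.2
    have has : a * s ∈ H := hH.1 _ ha _ (mem_of_lcoset_eq_self hS hH hs (hAs.symm.trans hA))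
    exact (cosetAct_eq_some_iff hS hH).2
      ⟨s, hs, hAs, hH.inv_mul_self_mem has, by rw [lcoset_eq_of_mem hS hH has, hA]⟩

end CosetAction

section OrbitMap

variable {S Y : Type*} [Semigroup S] {inv : S → S} {H : Set S} {actY : S → Y → Option Y}
  {y : Y}

/-- `(sH)↑ ↦ s · y`; the default `y` of `getD` is never used once `H ⊆ S_y`. -/
noncomputable def cosetOrbitMap (actY : S → Y → Option Y) (y : Y) (A : CosetSpace inv H) : Y :=
  (actY (Classical.choose A.2) y).getD y

theorem act_eq_some_cosetOrbitMap (hS : IsInvSgp S inv) (hH : IsClosedInvSub inv H)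
    (hY : IsAction actY) (hHy : H ⊆ stab actY y) {s : S} {A : CosetSpace inv H}
    (hs : inv s * s ∈ H) (hA : (A : Set S) = lcoset s H) :
    actY s y = some (cosetOrbitMap actY y A) := by
  obtain ⟨hs₀, hA₀⟩ := Classical.choose_spec A.2
  obtain ⟨z, hz⟩ := hY.exists_eq_some_of_inv_mul_self_mem_stab (hHy hs₀)
  have hs₀s := (lcoset_eq_lcoset_iff hS hH hs₀ hs).1 (hA₀.symm.trans hA)
  rw [hY.eq_of_inv_mul_mem_stab hS (hHy hs₀) (hHy hs₀s), cosetOrbitMap, hz, Option.getD_some]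

theorem isStrongMorphism_cosetOrbitMap (hS : IsInvSgp S inv) (hH : IsClosedInvSub inv H)
    (hY : IsAction actY) (hHy : H ⊆ stab actY y) (hE : idemSet (stab actY y) ⊆ H) :
    IsStrongMorphism (cosetAct inv H) actY (cosetOrbitMap actY y) := by
  refine ⟨fun a A B h => ?_, fun a A z h => ?_⟩
  · obtain ⟨s, hs, hA, has, hB⟩ := (cosetAct_eq_some_iff hS hH).1 h
    have hasy := act_eq_some_cosetOrbitMap hS hH hY hHy has hB
    rwa [hY.2, act_eq_some_cosetOrbitMap hS hH hY hHy hs hA, Option.bind_some] at hasy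
  · obtain ⟨s, hs, hA⟩ := A.2
    have hasy : actY (a * s) y = some z := by
      rw [hY.2, act_eq_some_cosetOrbitMap hS hH hY hHy hs hA, Option.bind_some, h]
    have has := hE (hY.inv_mul_self_mem_idemSet_stab hS hasy)
    exact ⟨CosetSpace.of has, (cosetAct_eq_some_iff hS hH).2 ⟨s, hs, hA, has, rfl⟩⟩

theorem cosetOrbitMap_surjective (hS : IsInvSgp S inv) (hH : IsClosedInvSub inv H)
    (hY : IsAction actY) (hYt : IsTransitiveAct actY) (hHy : H ⊆ stab actY y)
    (hE : idemSet (stab actY y) ⊆ H) :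
    Function.Surjective (cosetOrbitMap (inv := inv) (H := H) actY y) := by
  intro z
  obtain ⟨s, hs⟩ := hYt y z
  have hs' := hE (hY.inv_mul_self_mem_idemSet_stab hS hs)
  refine ⟨CosetSpace.of hs', Option.some_injective _ ?_⟩
  rw [← act_eq_some_cosetOrbitMap hS hH hY hHy hs' rfl, hs]

theorem cosetOrbitMap_eq_of_val_eq (hS : IsInvSgp S inv) (hH : IsClosedInvSub inv H)
    (hY : IsAction actY) (hHy : H ⊆ stab actY y) {A : CosetSpace inv H}
    (hA : (A : Set S) = H) : cosetOrbitMap actY y A = y := by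
  obtain ⟨s, hs, hAs⟩ := A.2
  have hsy : actY s y = some y := hHy (mem_of_lcoset_eq_self hS hH hs (hAs.symm.trans hA))
  exact Option.some_injective _ ((act_eq_some_cosetOrbitMap hS hH hY hHy hs hAs).symm.trans hsy)

end OrbitMap

/-- Every transitive action of `S` is strongly covered by a
universal one, namely the action on the left cosets of `H = (E(S_y))↑`. -/
theorem stmt12 {S Y : Type*} [Semigroup S] (inv : S → S) (hS : IsInvSgp S inv)
    (actY : S → Y → Option Y) (hY : IsAction actY) (hYt : IsTransitiveAct actY)
    (y : Y) (F H : Set S)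
    (hF : F = idemSet (stab actY y)) (hH : H = up F) :
    -- `H` is itself a left coset, i.e. a point of the coset space `X`
    (∃ s : S, inv s * s ∈ H ∧ H = lcoset s H) ∧
    -- the partial action `a · (sH)↑ = ((a*s)H)↑`, defined when `inv (a*s) * (a*s) ∈ H`
    ∃ act : S → {A : Set S // ∃ s : S, inv s * s ∈ H ∧ A = lcoset s H} →
        Option {A : Set S // ∃ s : S, inv s * s ∈ H ∧ A = lcoset s H},
      (∀ (a : S) (A B : {A : Set S // ∃ s : S, inv s * s ∈ H ∧ A = lcoset s H}),
        act a A = some B ↔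
          ∃ s : S, inv s * s ∈ H ∧ (A : Set S) = lcoset s H ∧
            inv (a * s) * (a * s) ∈ H ∧ (B : Set S) = lcoset (a * s) H) ∧
      -- it is a transitive action satisfying (A1) and (A2)
      IsAction act ∧ IsTransitiveAct act ∧
      -- the stabilizer of the point `H` is `H` itself (so the action is universal)
      (∀ A : {A : Set S // ∃ s : S, inv s * s ∈ H ∧ A = lcoset s H},
        (A : Set S) = H → stab act A = H) ∧
      -- and there is a surjective strong morphism onto `Y` sending `H` to `y`
      ∃ α : {A : Set S // ∃ s : S, inv s * s ∈ H ∧ A = lcoset s H} → Y,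
        IsStrongMorphism act actY α ∧ Function.Surjective α ∧
          ∀ A : {A : Set S // ∃ s : S, inv s * s ∈ H ∧ A = lcoset s H},
            (A : Set S) = H → α A = y := by
  subst hF hH
  have hclosed := up_idemSet_stab_isClosedInvSub hS hY y
  have hHy := up_idemSet_stab_subset hY y
  have hE := subset_up hS (idemSet (stab actY y))
  obtain ⟨s, hs⟩ := hYt y y
  have hne : (up (idemSet (stab actY y))).Nonempty :=
    ⟨_, hE (hY.inv_mul_self_mem_idemSet_stab hS hs)⟩
  exact ⟨exists_lcoset_eq_self hS hclosed hne, cosetAct inv _,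
    fun _ _ _ => cosetAct_eq_some_iff hS hclosed, isAction_cosetAct hS hclosed,
    isTransitiveAct_cosetAct hS hclosed, fun _ => stab_cosetAct hS hclosed,
    cosetOrbitMap actY y, isStrongMorphism_cosetOrbitMap hS hclosed hY hHy hE,
    cosetOrbitMap_surjective hS hclosed hY hYt hHy hE,
    fun _ => cosetOrbitMap_eq_of_val_eq hS hclosed hY hHy⟩

end InvSgpPaper
end
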